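/- For every integer n ≥ 2, the join K_{1,n} + K̄_1 is super edge-magic with magic constant 3n + 6. -/

import Mathlib

/-! Label the centre `1`, the leaves `2, …, n + 1` and the apex `n + 2`. The spokes then have
edge sums `3, …, n + 2` and the edges to the apex `n + 3, …, 2n + 3`: these are `q = 2n + 1`
consecutive integers starting at `s = 3`. Any vertex labelling onto `{1, …, p}` with this
property becomes super edge-magic with constant `p + q + s` by giving the edge `e` the label
`p + q + s - (sum at e)`, and `(n + 2) + (2n + 1) + 3 = 3n + 6`. -/

open SimpleGraph

/-- A super edge-magic labeling of `G` with magic constant `k`: a bijection from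
vertices and edges onto `{1, …, p+q}` sending vertices onto `{1, …, p}`, with
`f x + f (xy) + f y = k` for every edge `xy`. -/
def IsSEMWith {V : Type*} [Fintype V] (G : SimpleGraph V) (k : ℕ) : Prop :=
  ∃ (f : V → ℕ) (g : G.edgeSet → ℕ),
    Function.Injective (Sum.elim f g) ∧
    Set.range (Sum.elim f g) = Set.Icc 1 (Fintype.card V + G.edgeSet.ncard) ∧
    Set.range f = Set.Icc 1 (Fintype.card V) ∧
    ∀ (x y : V) (h : G.Adj x y), f x + g ⟨s(x, y), G.mem_edgeSet.mpr h⟩ + f y = k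

/-- `G` is super edge-magic. -/
def IsSEM {V : Type*} [Fintype V] (G : SimpleGraph V) : Prop :=
  ∃ k : ℕ, IsSEMWith G k

/-- The graph `G ∪ t K₁`: `G` together with `t` added isolated vertices. -/
def unionIsolated {V : Type*} (G : SimpleGraph V) (t : ℕ) : SimpleGraph (V ⊕ Fin t) :=
  G.map Function.Embedding.inl

/-- The super edge-magic deficiency `μₛ(G)`: the least `t` such that `G ∪ t K₁`
is super edge-magic, or `⊤` if there is no such `t`. -/
noncomputable def semDeficiency {V : Type*} [Fintype V] (G : SimpleGraph V) : ℕ∞ :=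
  sInf ((fun t : ℕ => (t : ℕ∞)) '' {t : ℕ | IsSEM (unionIsolated G t)})

/-- `H n`: the wheel `W_n` (hub `0`, rim `1, …, n`) minus the spoke `{0, 1}`. -/
def wheelMinusSpoke (n : ℕ) : SimpleGraph (Fin (n + 1)) :=
  SimpleGraph.fromRel (fun i j =>
    ((i : ℕ) = 0 ∧ 2 ≤ (j : ℕ)) ∨
    ((j : ℕ) = (i : ℕ) + 1 ∧ 1 ≤ (i : ℕ)) ∨
    ((i : ℕ) = n ∧ (j : ℕ) = 1))

/-- The join `P_n + K̄_m`: a path `u_1 … u_n` plus `m` vertices joined to every `u_i`. -/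
def pathJoin (n m : ℕ) : SimpleGraph (Fin n ⊕ Fin m) :=
  SimpleGraph.fromRel (fun a b =>
    (∃ i j : Fin n, a = Sum.inl i ∧ b = Sum.inl j ∧ (j : ℕ) = (i : ℕ) + 1) ∨
    (∃ (i : Fin n) (j : Fin m), a = Sum.inl i ∧ b = Sum.inr j))

/-- The join `K_{1,n} + K̄_m`: a star with center `Sum.inl 0` and leaves
`Sum.inl i`, `i ≠ 0`, plus `m` vertices joined to all star vertices. -/
def starJoin (n m : ℕ) : SimpleGraph (Fin (n + 1) ⊕ Fin m) :=
  SimpleGraph.fromRel (fun a b =>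
    (∃ i : Fin (n + 1), a = Sum.inl 0 ∧ b = Sum.inl i ∧ i ≠ 0) ∨
    (∃ (i : Fin (n + 1)) (j : Fin m), a = Sum.inl i ∧ b = Sum.inr j))

/-- The join `C_n + K̄_m`: a cycle `u_1 … u_n` plus `m` vertices joined to every `u_i`. -/
def cycleJoin (n m : ℕ) : SimpleGraph (Fin n ⊕ Fin m) :=
  SimpleGraph.fromRel (fun a b =>
    (∃ i j : Fin n, a = Sum.inl i ∧ b = Sum.inl j ∧
      ((j : ℕ) = (i : ℕ) + 1 ∨ ((i : ℕ) = n - 1 ∧ (j : ℕ) = 0))) ∨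
    (∃ (i : Fin n) (j : Fin m), a = Sum.inl i ∧ b = Sum.inr j))

/-- The join `G + K̄_m`: `G` plus `m` new vertices joined to every vertex of `G`. -/
def joinIsolated {V : Type*} (G : SimpleGraph V) (m : ℕ) : SimpleGraph (V ⊕ Fin m) :=
  SimpleGraph.fromRel (fun a b =>
    (∃ x y : V, a = Sum.inl x ∧ b = Sum.inl y ∧ G.Adj x y) ∨
    (∃ (x : V) (j : Fin m), a = Sum.inl x ∧ b = Sum.inr j))

def edgeSum {V : Type*} (f : V → ℕ) : Sym2 V → ℕ :=
  Sym2.lift ⟨fun x y => f x + f y, fun _ _ => add_comm _ _⟩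

@[simp]
lemma edgeSum_mk {V : Type*} (f : V → ℕ) (x y : V) : edgeSum f s(x, y) = f x + f y := rfl

lemma Fin.bijOn_add_val (c N : ℕ) :
    Set.BijOn (fun i : Fin N => c + (i : ℕ)) Set.univ (Set.Ico c (c + N)) := by
  refine ⟨fun i _ => by simp, fun i _ j _ h => Fin.ext (by simpa using h), fun m hm => ?_⟩
  obtain ⟨hcm, hmN⟩ := hm
  exact ⟨⟨m - c, by omega⟩, trivial, by simp; omega⟩

theorem isSEMWith_of_bijOn_edgeSum {V : Type*} [Fintype V] {G : SimpleGraph V} {f : V → ℕ}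
    {s q : ℕ} (hf : Set.BijOn f Set.univ (Set.Icc 1 (Fintype.card V)))
    (he : Set.BijOn (edgeSum f) G.edgeSet (Set.Ico s (s + q))) :
    IsSEMWith G (Fintype.card V + q + s) := by
  set p := Fintype.card V
  set g : G.edgeSet → ℕ := fun e => p + q + s - edgeSum f e
  have hf_mem (v : V) : 1 ≤ f v ∧ f v ≤ p := hf.mapsTo (Set.mem_univ v)
  have he_mem (e : G.edgeSet) : s ≤ edgeSum f e ∧ edgeSum f e < s + q := he.mapsTo e.2
  have hf_range : Set.range f = Set.Icc 1 p := by rw [← Set.image_univ, hf.image_eq]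
  have hg_inj : Function.Injective g := fun e₁ e₂ h => by
    have := he_mem e₁; have := he_mem e₂
    exact Subtype.ext (he.injOn e₁.2 e₂.2 (by simp only [g] at h; omega))
  have hg_range : Set.range g = Set.Ioc p (p + q) := by
    ext m
    constructor
    · rintro ⟨e, rfl⟩
      have := he_mem e
      simp only [g, Set.mem_Ioc]
      omega
    · rintro ⟨hpm, hmq⟩
      obtain ⟨e, he', hem⟩ := he.surjOn (show p + q + s - m ∈ Set.Ico s (s + q) by
        constructor <;> omega)
      exact ⟨⟨e, he'⟩, by simp only [g, hem]; omega⟩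
  have hq : G.edgeSet.ncard = q := by rw [he.ncard_eq, Set.ncard_Ico_nat]; omega
  refine ⟨f, g, ?_, ?_, hf_range, fun x y _ => ?_⟩
  · rintro (v | e) (w | e') h
    · exact congrArg Sum.inl (hf.injOn (Set.mem_univ v) (Set.mem_univ w) h)
    · have := hf_mem v; have := he_mem e'
      simp only [Sum.elim_inl, Sum.elim_inr, g] at h; omega
    · have := hf_mem w; have := he_mem e
      simp only [Sum.elim_inl, Sum.elim_inr, g] at h; omega
    · exact congrArg Sum.inr (hg_inj h)
  · rw [Set.Sum.elim_range, hf_range, hg_range, hq]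
    ext m
    simp only [Set.mem_union, Set.mem_Icc, Set.mem_Ioc]
    omega
  · have := he_mem ⟨s(x, y), G.mem_edgeSet.mpr ‹_›⟩
    simp only [edgeSum_mk, g] at this ⊢
    omega

def starJoinEdge (n : ℕ) : Fin n ⊕ Fin (n + 1) → Sym2 (Fin (n + 1) ⊕ Fin 1) :=
  Sum.elim (fun j => s(Sum.inl 0, Sum.inl j.succ)) (fun i => s(Sum.inl i, Sum.inr 0))

lemma range_starJoinEdge (n : ℕ) : Set.range (starJoinEdge n) = (starJoin n 1).edgeSet := by
  ext e
  induction e using Sym2.ind with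
  | _ a b =>
  simp only [Set.mem_range, mem_edgeSet, starJoin, fromRel_adj]
  constructor
  · rintro ⟨j | i, he⟩ <;>
      simp only [starJoinEdge, Sum.elim_inl, Sum.elim_inr, Sym2.eq_iff] at he <;>
      rcases he with ⟨rfl, rfl⟩ | ⟨rfl, rfl⟩ <;> simp [Fin.succ_ne_zero, eq_comm]
  · rintro ⟨-, (⟨i, rfl, rfl, hi⟩ | ⟨i, j, rfl, rfl⟩) | (⟨i, rfl, rfl, hi⟩ | ⟨i, j, rfl, rfl⟩)⟩
    · exact ⟨.inl (i.pred hi), by simp [starJoinEdge]⟩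
    · exact ⟨.inr i, by simp [starJoinEdge, Subsingleton.elim j 0]⟩
    · exact ⟨.inl (i.pred hi), by simp [starJoinEdge, Sym2.eq_swap]⟩
    · exact ⟨.inr i, by simp [starJoinEdge, Subsingleton.elim j 0, Sym2.eq_swap]⟩

def starJoinLabel (n : ℕ) (v : Fin (n + 1) ⊕ Fin 1) : ℕ :=
  1 + (finSumFinEquiv v : ℕ)

lemma edgeSum_starJoinLabel_starJoinEdge (n : ℕ) (x : Fin n ⊕ Fin (n + 1)) :
    edgeSum (starJoinLabel n) (starJoinEdge n x) = 3 + (finSumFinEquiv x : ℕ) := by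
  rcases x with j | i <;> simp [starJoinEdge, starJoinLabel] <;> omega

theorem stmt19_general (n : ℕ) : IsSEMWith (starJoin n 1) (3 * n + 6) := by
  have hcard : Fintype.card (Fin (n + 1) ⊕ Fin 1) = n + 2 := by simp
  have hvert : Set.BijOn (starJoinLabel n) Set.univ
      (Set.Icc 1 (Fintype.card (Fin (n + 1) ⊕ Fin 1))) := by
    rw [hcard, ← Set.Ico_add_one_right_eq_Icc, add_comm (n + 2) 1]
    exact (Fin.bijOn_add_val 1 _).comp finSumFinEquiv.bijective.bijOn_univ
  have hsum : Set.BijOn (edgeSum (starJoinLabel n) ∘ starJoinEdge n) Set.univ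
      (Set.Ico 3 (3 + (n + (n + 1)))) :=
    ((Fin.bijOn_add_val 3 _).comp finSumFinEquiv.bijective.bijOn_univ).congr
      fun x _ => (edgeSum_starJoinLabel_starJoinEdge n x).symm
  have hinj : Function.Injective (starJoinEdge n) :=
    .of_comp (f := edgeSum (starJoinLabel n)) (Set.injOn_univ.mp hsum.injOn)
  rw [Set.bijOn_comp_iff hinj.injOn, Set.image_univ, range_starJoinEdge] at hsum
  have := isSEMWith_of_bijOn_edgeSum hvert hsum
  rwa [hcard, show n + 2 + (n + (n + 1)) + 3 = 3 * n + 6 by ring] at this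

/-- for every `n ≥ 2`, `K_{1,n} + K̄₁` is super edge-magic with magic
constant `3n + 6`. -/
theorem stmt19 (n : ℕ) (hn : 2 ≤ n) : IsSEMWith (starJoin n 1) (3 * n + 6) :=
  stmt19_general n
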